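/- arXiv:math/9907195 — 2 statements merged into one kernel-verified Lean document; each statement's English description precedes it below -/
import Mathlib

section
/- Suppose B ⊆ ℝ^d is a closed convex set with 0 ∈ B°, γ ∈ ℝ^d, e is a unit coordinate vector with ⟨γ,e⟩ = 1, and B is invariant under the oblique projection L x = x - ⟨x,e⟩γ (i.e., L(B) ⊆ B). Then for any z ∈ ∂B and any outward normal n to B at z, ⟨z,e⟩ < 0 implies ⟨γ,n⟩ ≤ 0. -/
open RealInnerProductSpace

theorem inner_nonpos_of_forall_inner_sub_nonpos_of_sub_smul_mem {E : Type*}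
    [NormedAddCommGroup E] [InnerProductSpace ℝ E] {B : Set E} {z n v : E} {t : ℝ}
    (hn : ∀ y ∈ B, ⟪y - z, n⟫ ≤ 0) (ht : t < 0) (hmem : z - t • v ∈ B) :
    ⟪v, n⟫ ≤ 0 := by
  have h := hn _ hmem
  rw [sub_sub_cancel_left, inner_neg_left, real_inner_smul_left] at h
  nlinarith

theorem oblique_projection_invariance_normal_general {d : ℕ} (i : Fin d)
    (B : Set (EuclideanSpace ℝ (Fin d)))
    (hBclosed : IsClosed B)
    (γ : EuclideanSpace ℝ (Fin d))
    (hinv : ∀ x ∈ B, x - (inner ℝ x (EuclideanSpace.single i (1:ℝ)) : ℝ) • γ ∈ B) :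
    ∀ z ∈ frontier B, ∀ n : EuclideanSpace ℝ (Fin d),
      (∀ y ∈ B, (inner ℝ (y - z) n : ℝ) ≤ 0) →
      (inner ℝ z (EuclideanSpace.single i (1:ℝ)) : ℝ) < 0 →
      (inner ℝ γ n : ℝ) ≤ 0 := fun z hz _ hn hze =>
  inner_nonpos_of_forall_inner_sub_nonpos_of_sub_smul_mem hn hze
    (hinv z (hBclosed.frontier_subset hz))

/-- If a closed convex set `B ⊆ ℝ^d` with `0 ∈ B°` is invariant under the oblique
projection `L x = x - ⟪x, e⟫ γ`, where `e` is a coordinate unit vector with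
`⟪γ, e⟫ = 1`, then for `z ∈ ∂B` and any outward normal `n` to `B` at `z`,
`⟪z, e⟫ < 0` implies `⟪γ, n⟫ ≤ 0`. -/
theorem oblique_projection_invariance_normal {d : ℕ} (i : Fin d)
    (B : Set (EuclideanSpace ℝ (Fin d)))
    (hBclosed : IsClosed B) (hBconv : Convex ℝ B)
    (hB0 : (0 : EuclideanSpace ℝ (Fin d)) ∈ interior B)
    (γ : EuclideanSpace ℝ (Fin d))
    (hγe : (inner ℝ γ (EuclideanSpace.single i (1:ℝ)) : ℝ) = 1)
    (hinv : ∀ x ∈ B, x - (inner ℝ x (EuclideanSpace.single i (1:ℝ)) : ℝ) • γ ∈ B) :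
    ∀ z ∈ frontier B, ∀ n : EuclideanSpace ℝ (Fin d),
      (∀ y ∈ B, (inner ℝ (y - z) n : ℝ) ≤ 0) →
      (inner ℝ z (EuclideanSpace.single i (1:ℝ)) : ℝ) < 0 →
      (inner ℝ γ n : ℝ) ≤ 0 :=
  oblique_projection_invariance_normal_general i B hBclosed γ hinv
end

section
/- Let ν : ℝ_+^d → [0,1] be continuously differentiable with bounded gradient, satisfying ⟨Dν(x), γ_i⟩ ≤ 0 for all x ∈ ℝ_+^d and i with x_i = 0, and ⟨Dν(x), γ_i⟩ < 0 strictly for x in a given compact set K ⊆ ℝ_+^d and i with x_i = 0, where ν has compact support. If δ_i > 0 with ∑ δ_i ≤ 1, and every x ∈ ℝ_+^d satisfies δ_i x ∈ K for some i, then μ(x) = ∑_{i=1}^∞ δ_i ν(δ_i x) is continuously differentiable with values in [0,1], sup_x ‖Dμ(x)‖ < ∞, and ⟨Dμ(x), γ_i⟩ < 0 for all x ∈ ℝ_+^d and i with x_i = 0. -/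
/-!
Each term `δₙ ν(δₙ x)` has derivative `δₙ² Dν(δₙ x)`, of norm at most `δₙ C` when `‖Dν‖ ≤ C`
and `δₙ ≤ 1`, so the series of derivatives converges uniformly and may be differentiated term by
term; the same domination gives continuity of `Dμ` and the bound `‖Dμ‖ ≤ C ∑ δₙ`. On the face
`xᵢ = 0` every point `δₙ x` lies on the same face, so every term of `⟨Dμ(x), γᵢ⟩` is `≤ 0`, and
the term with `δₙ x ∈ K` is `< 0`.
-/

noncomputable section

open Set

namespace ScaledSum

variable {E : Type*} [NormedAddCommGroup E] [NormedSpace ℝ E] {δ : ℕ → ℝ} {ν : E → ℝ} {C : ℝ}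

def scaledSum (δ : ℕ → ℝ) (ν : E → ℝ) (x : E) : ℝ := ∑' n, δ n * ν (δ n • x)

def scaledSumFDeriv (δ : ℕ → ℝ) (ν : E → ℝ) (x : E) : E →L[ℝ] ℝ :=
  ∑' n, (δ n * δ n) • fderiv ℝ ν (δ n • x)

theorem hasFDerivAt_mul_comp_smul {ν' : E →L[ℝ] ℝ} {x : E} (c : ℝ)
    (h : HasFDerivAt ν ν' (c • x)) :
    HasFDerivAt (fun y => c * ν (c • y)) ((c * c) • ν') x := by
  refine ((h.comp x ((hasFDerivAt_id x).const_smul c)).const_smul c).congr_fderiv ?_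
  rw [ContinuousLinearMap.comp_smul, ContinuousLinearMap.comp_id, smul_smul]

theorem norm_mul_self_smul_le {ν' : E →L[ℝ] ℝ} {c : ℝ} (hc0 : 0 ≤ c) (hc1 : c ≤ 1)
    (hC : ‖ν'‖ ≤ C) : ‖(c * c) • ν'‖ ≤ c * C := by
  rw [norm_smul, Real.norm_of_nonneg (mul_nonneg hc0 hc0), mul_assoc]
  exact mul_le_mul_of_nonneg_left
    ((mul_le_of_le_one_left (norm_nonneg _) hc1).trans hC) hc0

theorem scaledSum_mem_Icc (hδ0 : ∀ n, 0 ≤ δ n) (hδ : Summable δ)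
    (hν : ∀ x, ν x ∈ Icc (0 : ℝ) 1) (x : E) : scaledSum δ ν x ∈ Icc 0 (∑' n, δ n) := by
  have hterm : ∀ n, δ n * ν (δ n • x) ∈ Icc 0 (δ n) := fun n =>
    ⟨mul_nonneg (hδ0 n) (hν _).1, mul_le_of_le_one_right (hδ0 n) (hν _).2⟩
  have hsum : Summable fun n => δ n * ν (δ n • x) :=
    hδ.of_nonneg_of_le (fun n => (hterm n).1) (fun n => (hterm n).2)
  exact ⟨tsum_nonneg fun n => (hterm n).1, hsum.tsum_le_tsum (fun n => (hterm n).2) hδ⟩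

theorem hasFDerivAt_scaledSum (hδ0 : ∀ n, 0 ≤ δ n) (hδ1 : ∀ n, δ n ≤ 1) (hδ : Summable δ)
    (hν : Differentiable ℝ ν) (hC : ∀ x, ‖fderiv ℝ ν x‖ ≤ C) (x : E) :
    HasFDerivAt (scaledSum δ ν) (scaledSumFDeriv δ ν x) x := by
  have hsum0 : Summable fun n => δ n * ν (δ n • (0 : E)) := by
    simpa only [smul_zero] using hδ.mul_right (ν 0)
  exact hasFDerivAt_tsum (hδ.mul_right C)
    (fun n x => hasFDerivAt_mul_comp_smul (δ n) (hν _).hasFDerivAt)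
    (fun n x => norm_mul_self_smul_le (hδ0 n) (hδ1 n) (hC _)) hsum0 x

theorem fderiv_scaledSum (hδ0 : ∀ n, 0 ≤ δ n) (hδ1 : ∀ n, δ n ≤ 1) (hδ : Summable δ)
    (hν : Differentiable ℝ ν) (hC : ∀ x, ‖fderiv ℝ ν x‖ ≤ C) :
    fderiv ℝ (scaledSum δ ν) = scaledSumFDeriv δ ν :=
  funext fun x => (hasFDerivAt_scaledSum hδ0 hδ1 hδ hν hC x).fderiv

theorem summable_scaledSumFDeriv (hδ0 : ∀ n, 0 ≤ δ n) (hδ1 : ∀ n, δ n ≤ 1) (hδ : Summable δ)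
    (hC : ∀ x, ‖fderiv ℝ ν x‖ ≤ C) (x : E) :
    Summable fun n => (δ n * δ n) • fderiv ℝ ν (δ n • x) :=
  (hδ.mul_right C).of_norm_bounded fun n => norm_mul_self_smul_le (hδ0 n) (hδ1 n) (hC _)

theorem norm_scaledSumFDeriv_le (hδ0 : ∀ n, 0 ≤ δ n) (hδ1 : ∀ n, δ n ≤ 1) (hδ : Summable δ)
    (hC : ∀ x, ‖fderiv ℝ ν x‖ ≤ C) (x : E) :
    ‖scaledSumFDeriv δ ν x‖ ≤ (∑' n, δ n) * C := by
  have hbound n := norm_mul_self_smul_le (hδ0 n) (hδ1 n) (hC (δ n • x))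
  rw [← tsum_mul_right]
  exact tsum_of_norm_bounded ((hδ.mul_right C).hasSum) hbound

theorem contDiff_one_scaledSum (hδ0 : ∀ n, 0 ≤ δ n) (hδ1 : ∀ n, δ n ≤ 1) (hδ : Summable δ)
    (hν : ContDiff ℝ 1 ν) (hC : ∀ x, ‖fderiv ℝ ν x‖ ≤ C) :
    ContDiff ℝ 1 (scaledSum δ ν) := by
  have hν₁ := hν.differentiable one_ne_zero
  rw [contDiff_one_iff_fderiv, fderiv_scaledSum hδ0 hδ1 hδ hν₁ hC]
  refine ⟨fun x => (hasFDerivAt_scaledSum hδ0 hδ1 hδ hν₁ hC x).differentiableAt, ?_⟩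
  exact continuous_tsum
    (fun n => ((hν.continuous_fderiv one_ne_zero).comp (continuous_const_smul (δ n))).const_smul
      (δ n * δ n))
    (hδ.mul_right C) fun n x => norm_mul_self_smul_le (hδ0 n) (hδ1 n) (hC _)

theorem scaledSumFDeriv_apply_neg {x v : E}
    (hsum : Summable fun n => (δ n * δ n) • fderiv ℝ ν (δ n • x))
    (hle : ∀ n, fderiv ℝ ν (δ n • x) v ≤ 0)
    (hlt : ∃ n, δ n ≠ 0 ∧ fderiv ℝ ν (δ n • x) v < 0) :
    scaledSumFDeriv δ ν x v < 0 := by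
  obtain ⟨m, hδm, hm⟩ := hlt
  have hasSum := (ContinuousLinearMap.apply ℝ ℝ v).hasSum hsum.hasSum
  simp only [ContinuousLinearMap.apply_apply, FunLike.coe_smul, Pi.smul_apply,
    smul_eq_mul] at hasSum
  exact hasSum_lt (fun n => mul_nonpos_of_nonneg_of_nonpos (mul_self_nonneg _) (hle n))
    (mul_neg_of_pos_of_neg (mul_self_pos.2 hδm) hm) hasSum hasSum_zero

end ScaledSum

end

open ScaledSum in
theorem sum_scaled_boundary_function_general {d : ℕ}
    (orthant : Set (EuclideanSpace ℝ (Fin d)))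
    (horthant : orthant = {x : EuclideanSpace ℝ (Fin d) | ∀ i, 0 ≤ x i})
    (γ : Fin d → EuclideanSpace ℝ (Fin d))
    (K : Set (EuclideanSpace ℝ (Fin d)))
    (ν : EuclideanSpace ℝ (Fin d) → ℝ)
    (hν : ContDiff ℝ 1 ν)
    (hrange : ∀ x, ν x ∈ Set.Icc (0:ℝ) 1)
    (hgradbd : ∃ C : ℝ, ∀ x, ‖fderiv ℝ ν x‖ ≤ C)
    (hweak : ∀ x ∈ orthant, ∀ i, x i = 0 → fderiv ℝ ν x (γ i) ≤ 0)
    (hstrict : ∀ x ∈ K, ∀ i, x i = 0 → fderiv ℝ ν x (γ i) < 0)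
    (δs : ℕ → ℝ) (hδpos : ∀ n, 0 < δs n) (hδsum : Summable δs)
    (hδle : (∑' n, δs n) ≤ 1)
    (hcover : ∀ x ∈ orthant, ∃ n, δs n • x ∈ K)
    (μ : EuclideanSpace ℝ (Fin d) → ℝ)
    (hμ : ∀ x, μ x = ∑' n, δs n * ν (δs n • x)) :
    ContDiff ℝ 1 μ ∧
    (∀ x ∈ orthant, μ x ∈ Set.Icc (0:ℝ) 1) ∧
    (∃ C : ℝ, ∀ x, ‖fderiv ℝ μ x‖ ≤ C) ∧
    (∀ x ∈ orthant, ∀ i, x i = 0 → fderiv ℝ μ x (γ i) < 0) := by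
  obtain ⟨C, hC⟩ := hgradbd
  have hδ0 n := (hδpos n).le
  have hδ1 n : δs n ≤ 1 := (hδsum.le_tsum n fun m _ => hδ0 m).trans hδle
  have hν₁ := hν.differentiable one_ne_zero
  obtain rfl : μ = scaledSum δs ν := funext hμ
  rw [fderiv_scaledSum hδ0 hδ1 hδsum hν₁ hC]
  refine ⟨contDiff_one_scaledSum hδ0 hδ1 hδsum hν hC,
    fun x _ => Set.Icc_subset_Icc le_rfl hδle (scaledSum_mem_Icc hδ0 hδsum hrange x),
    ⟨C, fun x => (norm_scaledSumFDeriv_le hδ0 hδ1 hδsum hC x).trans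
      (mul_le_of_le_one_left ((norm_nonneg _).trans (hC 0)) hδle)⟩, ?_⟩
  intro x hx i hxi
  have hface n : δs n • x ∈ orthant ∧ (δs n • x) i = 0 := by
    subst horthant
    exact ⟨fun j => mul_nonneg (hδ0 n) (hx j), by simp [hxi]⟩
  obtain ⟨m, hm⟩ := hcover x hx
  exact scaledSumFDeriv_apply_neg (summable_scaledSumFDeriv hδ0 hδ1 hδsum hC x)
    (fun n => hweak _ (hface n).1 i (hface n).2)
    ⟨m, (hδpos m).ne', hstrict _ hm i (hface m).2⟩

/-- Construction of the function `μ` of Lemma 2.2: summing scaled copies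
`μ(x) = ∑ δᵢ ν(δᵢ x)` of a `C¹` function `ν` with compact support, values in `[0,1]`,
bounded gradient, `⟨Dν(x), γᵢ⟩ ≤ 0` on the boundary of the orthant and strictly
negative on a compact set `K`, and the scalings `δᵢ x` covering `K`, yields a `C¹`
function with values in `[0,1]`, bounded gradient, and `⟨Dμ(x), γᵢ⟩ < 0` whenever
`xᵢ = 0`. -/
theorem sum_scaled_boundary_function {d : ℕ}
    (orthant : Set (EuclideanSpace ℝ (Fin d)))
    (horthant : orthant = {x : EuclideanSpace ℝ (Fin d) | ∀ i, 0 ≤ x i})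
    (γ : Fin d → EuclideanSpace ℝ (Fin d))
    (K : Set (EuclideanSpace ℝ (Fin d))) (hK : IsCompact K) (hKsub : K ⊆ orthant)
    (ν : EuclideanSpace ℝ (Fin d) → ℝ)
    (hν : ContDiff ℝ 1 ν) (hsupp : HasCompactSupport ν)
    (hrange : ∀ x, ν x ∈ Set.Icc (0:ℝ) 1)
    (hgradbd : ∃ C : ℝ, ∀ x, ‖fderiv ℝ ν x‖ ≤ C)
    (hweak : ∀ x ∈ orthant, ∀ i, x i = 0 → fderiv ℝ ν x (γ i) ≤ 0)
    (hstrict : ∀ x ∈ K, ∀ i, x i = 0 → fderiv ℝ ν x (γ i) < 0)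
    (δs : ℕ → ℝ) (hδpos : ∀ n, 0 < δs n) (hδsum : Summable δs)
    (hδle : (∑' n, δs n) ≤ 1)
    (hcover : ∀ x ∈ orthant, ∃ n, δs n • x ∈ K)
    (μ : EuclideanSpace ℝ (Fin d) → ℝ)
    (hμ : ∀ x, μ x = ∑' n, δs n * ν (δs n • x)) :
    ContDiff ℝ 1 μ ∧
    (∀ x ∈ orthant, μ x ∈ Set.Icc (0:ℝ) 1) ∧
    (∃ C : ℝ, ∀ x, ‖fderiv ℝ μ x‖ ≤ C) ∧
    (∀ x ∈ orthant, ∀ i, x i = 0 → fderiv ℝ μ x (γ i) < 0) :=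
  sum_scaled_boundary_function_general orthant horthant γ K ν hν hrange hgradbd hweak hstrict δs
    hδpos hδsum hδle hcover μ hμ
end
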